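/- arXiv:hep-th/0507039 — 5 statements merged into one kernel-verified Lean document; each statement's English description precedes it below -/
import Mathlib

section
/- For every A₀ ∈ G⁴, the map ν ↦ F_ν(i(A₀)) is a bijection from G⁴ onto the fiber π₁⁻¹({A₀}); in particular, every fiber of the coarse graining map π₁ is in bijection with G⁴. -/
/-- The refining map `i : G⁴ → G⁸` of the minimal example. -/
def refiningMap {G : Type*} [Group G] :
    G × G × G × G → G × G × G × G × G × G × G × G :=
  fun (g₁, g₂, g₃, g₄) => (g₁, g₂, g₂, g₂, g₃, 1, 1, g₄)

/-- The coarse graining map `π₁ : G⁸ → G⁴`. -/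
def coarse₁ {G : Type*} [Group G] :
    G × G × G × G × G × G × G × G → G × G × G × G :=
  fun (g₁, g₂, _g₃, _g₄, g₅, g₆, g₇, g₈) => (g₁, g₂, g₅, g₈ * g₇⁻¹ * g₆)

/-- The family of maps `F_ν : G⁸ → G⁸` for `ν = (ν₃,ν₄,ν_c,ν_e) ∈ G⁴`. -/
def Fmap {G : Type*} [Group G] :
    G × G × G × G → (G × G × G × G × G × G × G × G) → G × G × G × G × G × G × G × G :=
  fun (ν₃, ν₄, νc, νe) (g₁, g₂, g₃, g₄, g₅, g₆, g₇, g₈) =>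
    (g₁, g₂, νc * g₃ * ν₃⁻¹, νe * g₄ * ν₄⁻¹, g₅, νc * g₆, νc * g₇ * νe⁻¹, g₈ * νe⁻¹)

/-- For every `A₀ ∈ G⁴`, the map `ν ↦ F_ν(i(A₀))` is a bijection from `G⁴` onto
the fiber `π₁⁻¹({A₀})`; in particular every fiber of `π₁` is in bijection with `G⁴`. -/
theorem Fmap_bijOn_fiber {G : Type*} [Group G] (A₀ : G × G × G × G) :
    Set.BijOn (fun ν : G × G × G × G => Fmap ν (refiningMap A₀))
      Set.univ (coarse₁ ⁻¹' {A₀}) := by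
  obtain ⟨a, b, c, d⟩ := A₀
  refine ⟨fun ν _ => ?_, fun ν _ μ _ h => ?_, fun g hg => ?_⟩
  · obtain ⟨ν₃, ν₄, νc, νe⟩ := ν
    simp only [Fmap, refiningMap, coarse₁, Set.mem_preimage, Set.mem_singleton_iff,
      Prod.mk.injEq]
    refine ⟨trivial, trivial, trivial, ?_⟩
    group
  · obtain ⟨ν₃, ν₄, νc, νe⟩ := ν
    obtain ⟨μ₃, μ₄, μc, μe⟩ := μ
    simp only [Fmap, refiningMap, Prod.mk.injEq] at h
    obtain ⟨-, -, h3, h4, -, h6, -, h8⟩ := h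
    have hc : νc = μc := by simpa using h6
    have he : νe = μe := by
      have := mul_left_cancel h8; exact inv_injective this
    subst hc he
    have h3' : ν₃ = μ₃ := by
      have := mul_left_cancel h3; exact inv_injective this
    have h4' : ν₄ = μ₄ := by
      have := mul_left_cancel h4; exact inv_injective this
    simp [h3', h4']
  · obtain ⟨g₁, g₂, g₃, g₄, g₅, g₆, g₇, g₈⟩ := g
    simp only [coarse₁, Set.mem_preimage, Set.mem_singleton_iff, Prod.mk.injEq] at hg
    obtain ⟨h1, h2, h5, h8⟩ := hg
    subst h1 h2 h5
    refine ⟨(g₃⁻¹ * g₆ * g₂, g₄⁻¹ * (g₈⁻¹ * d) * g₂, g₆, g₈⁻¹ * d), Set.mem_univ _, ?_⟩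
    simp only [Fmap, refiningMap, Prod.mk.injEq]
    refine ⟨trivial, trivial, by group, by group, trivial, by group, ?_, by group⟩
    rw [← h8]; group
end

section
/- Let G be a topological group. The map Φ : G⁴ × G⁴ → G⁸ defined by Φ(A₀, ν) = F_ν(i(A₀)) is a homeomorphism satisfying π₁ ∘ Φ = pr₁ (projection onto the first factor). Hence (G⁸, π₁, G⁴) is a trivial principal G⁴-fiber bundle with global section i. -/
/-!
`F_ν (i A)` stores `A` in the slots that `π₁` reads, and stores `ν_c` and `ν_e` in slots six and
seven without mixing in `A`; inside `π₁` the factors `ν_e⁻¹ · (ν_c ν_e⁻¹)⁻¹ · ν_c` cancel. Hence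
`ν` is recovered from the image point by group operations: `ν_c = h₆`, `ν_e = h₇⁻¹ h₆`, and then
`ν₃`, `ν₄` from `h₃`, `h₄`, while `A = π₁ h`.
-/

section Group

variable {G : Type*} [Group G]

def fiberCoord : G × G × G × G × G × G × G × G → G × G × G × G :=
  fun (_h₁, h₂, h₃, h₄, _h₅, h₆, h₇, _h₈) =>
    (h₃⁻¹ * h₆ * h₂, h₄⁻¹ * h₇⁻¹ * h₆ * h₂, h₆, h₇⁻¹ * h₆)

theorem coarse₁_Fmap_refiningMap (A ν : G × G × G × G) :
    coarse₁ (Fmap ν (refiningMap A)) = A := by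
  obtain ⟨g₁, g₂, g₃, g₄⟩ := A
  obtain ⟨ν₃, ν₄, νc, νe⟩ := ν
  simp [coarse₁, Fmap, refiningMap, mul_assoc]

theorem fiberCoord_Fmap_refiningMap (A ν : G × G × G × G) :
    fiberCoord (Fmap ν (refiningMap A)) = ν := by
  obtain ⟨g₁, g₂, g₃, g₄⟩ := A
  obtain ⟨ν₃, ν₄, νc, νe⟩ := ν
  simp [fiberCoord, Fmap, refiningMap, mul_assoc]

theorem Fmap_fiberCoord_refiningMap_coarse₁ (h : G × G × G × G × G × G × G × G) :
    Fmap (fiberCoord h) (refiningMap (coarse₁ h)) = h := by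
  obtain ⟨h₁, h₂, h₃, h₄, h₅, h₆, h₇, h₈⟩ := h
  simp [fiberCoord, coarse₁, Fmap, refiningMap, mul_assoc]

end Group

section TopologicalGroup

variable {G : Type*} [Group G] [TopologicalSpace G] [IsTopologicalGroup G]

theorem continuous_Fmap_refiningMap :
    Continuous fun p : (G × G × G × G) × (G × G × G × G) => Fmap p.2 (refiningMap p.1) := by
  unfold Fmap refiningMap
  fun_prop

theorem continuous_coarse₁ : Continuous (coarse₁ : G × G × G × G × G × G × G × G → _) := by
  unfold coarse₁
  fun_prop

theorem continuous_fiberCoord : Continuous (fiberCoord : G × G × G × G × G × G × G × G → _) := by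
  unfold fiberCoord
  fun_prop

def refiningChart : ((G × G × G × G) × (G × G × G × G)) ≃ₜ (G × G × G × G × G × G × G × G) where
  toFun p := Fmap p.2 (refiningMap p.1)
  invFun h := (coarse₁ h, fiberCoord h)
  left_inv p := Prod.ext (coarse₁_Fmap_refiningMap p.1 p.2) (fiberCoord_Fmap_refiningMap p.1 p.2)
  right_inv := Fmap_fiberCoord_refiningMap_coarse₁
  continuous_toFun := continuous_Fmap_refiningMap
  continuous_invFun := continuous_coarse₁.prodMk continuous_fiberCoord

end TopologicalGroup

/-- For a topological group `G`, the map `Φ : G⁴ × G⁴ → G⁸`,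
`Φ(A₀, ν) = F_ν(i(A₀))`, is a homeomorphism satisfying `π₁ ∘ Φ = pr₁`.
Hence `(G⁸, π₁, G⁴)` is a trivial principal `G⁴`-fiber bundle with
global section `i`. -/
theorem trivial_bundle_structure {G : Type*} [Group G] [TopologicalSpace G]
    [IsTopologicalGroup G] :
    ∃ Φ : ((G × G × G × G) × (G × G × G × G)) ≃ₜ (G × G × G × G × G × G × G × G),
      (∀ p : (G × G × G × G) × (G × G × G × G), Φ p = Fmap p.2 (refiningMap p.1)) ∧
      ∀ p : (G × G × G × G) × (G × G × G × G), coarse₁ (Φ p) = p.1 :=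
  ⟨refiningChart, fun _ => rfl, fun p => coarse₁_Fmap_refiningMap p.1 p.2⟩
end

section
/- The refining and coarse graining maps descend to the quotient by gauge transformations: L₂ ∘ i = ĩ ∘ L₁ and π̃₁ ∘ L₂ = L₁ ∘ π₁, i.e., refining and coarse graining commute with the passage to gauge-invariant loop variables. -/
/-- The induced refining map `ĩ : G² → G⁴`, `ĩ(k₁,k₂) = (k₁,1,1,k₂)`. -/
def refiningTil {G : Type*} [Group G] : G × G → G × G × G × G :=
  fun (k₁, k₂) => (k₁, 1, 1, k₂)

/-- The induced coarse graining map `π̃₁ : G⁴ → G²`. -/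
def coarseTil₁ {G : Type*} [Group G] : G × G × G × G → G × G :=
  fun (h₁, h₂, h₃, h₄) => (h₁, h₄ * h₃ * h₂)

/-- Passage to gauge-invariant loop variables on the finer lattice:
`L₂(g'₁,…,g'₈) = (g'₂⁻¹·g'₅⁻¹·g'₁, g'₃⁻¹·g'₆·g'₂, g'₄⁻¹·g'₇⁻¹·g'₃, g'₁⁻¹·g'₈·g'₄)`. -/
def loopVar₂ {G : Type*} [Group G] :
    G × G × G × G × G × G × G × G → G × G × G × G :=
  fun (g₁, g₂, g₃, g₄, g₅, g₆, g₇, g₈) =>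
    (g₂⁻¹ * g₅⁻¹ * g₁, g₃⁻¹ * g₆ * g₂, g₄⁻¹ * g₇⁻¹ * g₃, g₁⁻¹ * g₈ * g₄)

/-- Passage to gauge-invariant loop variables on the coarser lattice:
`L₁(g₁,g₂,g₃,g₄) = (g₂⁻¹·g₃⁻¹·g₁, g₁⁻¹·g₄·g₂)`. -/
def loopVar₁ {G : Type*} [Group G] : G × G × G × G → G × G :=
  fun (g₁, g₂, g₃, g₄) => (g₂⁻¹ * g₃⁻¹ * g₁, g₁⁻¹ * g₄ * g₂)

/-- The refining and coarse graining maps descend to the quotient by gauge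
transformations: `L₂ ∘ i = ĩ ∘ L₁` and `π̃₁ ∘ L₂ = L₁ ∘ π₁`. -/
theorem refining_coarse_descend {G : Type*} [Group G] :
    loopVar₂ ∘ (refiningMap : G × G × G × G → _) = refiningTil ∘ loopVar₁ ∧
    coarseTil₁ ∘ (loopVar₂ : G × G × G × G × G × G × G × G → _) = loopVar₁ ∘ coarse₁ := by
  constructor
  · funext ⟨g₁, g₂, g₃, g₄⟩
    simp [loopVar₂, loopVar₁, refiningMap, refiningTil, mul_assoc]
  · funext ⟨g₁, g₂, g₃, g₄, g₅, g₆, g₇, g₈⟩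
    simp [loopVar₂, loopVar₁, coarseTil₁, coarse₁, mul_assoc]
end

section
/- For a finite connected graph, the quotient of lattice connections by based gauge transformations is parametrized by independent loop holonomies: if V and E are finite types, (V, E, s, t) is a graph connected to the base vertex b, and G is a group, then the quotient of the set of lattice connections E → G by the action of the based gauge group is in bijection with G^{|E| − (|V| − 1)}, i.e., with the set of maps Fin(card E − (card V − 1)) → G. -/
/-!
Choose a spanning tree rooted at `b`, with parent edges pointing towards `b` in the graph
distance. Every connection is gauge equivalent to one that is trivial on the tree edges: the gauge
transformation is built outwards from the root along parent edges. It is unique, since a based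
gauge transformation between two such connections is constant along tree edges, hence trivial.
The tree has `|V| - 1` edges, so these connections are arbitrary functions on the remaining
`|E| - (|V| - 1)` edges.
-/

/-- Two lattice connections `A B : E → G` on the graph `(V, E, s, t)` are
related by a based gauge transformation (based at `b ∈ V`). -/
def gaugeRel {V E G : Type*} [Group G] (s t : E → V) (b : V)
    (A B : E → G) : Prop :=
  ∃ g : V → G, g b = 1 ∧ ∀ e : E, g (t e) * A e * (g (s e))⁻¹ = B e

theorem SimpleGraph.reachable_fromRel_of_eqvGen {V : Type*} {r : V → V → Prop} {x y : V}
    (h : Relation.EqvGen r x y) : (SimpleGraph.fromRel r).Reachable x y := by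
  refine (fromRel r).reachable_is_equivalence.eqvGen_iff.mp (h.mono fun x y hxy => ?_)
  by_cases hne : x = y
  · exact hne ▸ Reachable.refl x
  · exact ((fromRel_adj r x y).mpr ⟨hne, .inl hxy⟩).reachable

theorem SimpleGraph.Reachable.exists_adj_dist_lt {V : Type*} {Γ : SimpleGraph V} {u v : V}
    (h : Γ.Reachable u v) (hne : u ≠ v) : ∃ w, Γ.Adj u w ∧ Γ.dist w v < Γ.dist u v := by
  obtain ⟨p, hp⟩ := h.exists_walk_length_eq_dist
  cases p with
  | nil => exact absurd rfl hne
  | cons hadj q => exact ⟨_, hadj, (dist_le q).trans_lt (by simp at hp; omega)⟩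

def Equiv.eqOneOnEquivPiCompl {ι G : Type*} [One G] (S : Set ι) [DecidablePred (· ∈ S)] :
    {A : ι → G // ∀ i ∈ S, A i = 1} ≃ (↥Sᶜ → G) :=
  ((Equiv.piEquivPiSubtypeProd (· ∈ S) fun _ => G).subtypeEquiv fun A => by
    simp [funext_iff]).trans <|
    Equiv.prodSubtypeFstEquivSubtypeProd.trans (Equiv.uniqueProd _ {A : S → G // A = 1})

section Gauge

variable {V E G : Type*} [Group G] (s t : E → V)

def gaugeAct (g : V → G) (A : E → G) : E → G := fun e => g (t e) * A e * (g (s e))⁻¹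

variable {s t}

theorem gaugeAct_gaugeAct (g h : V → G) (A : E → G) :
    gaugeAct s t g (gaugeAct s t h A) = gaugeAct s t (g * h) A := by
  funext e
  simp only [gaugeAct, Pi.mul_apply]
  group

theorem gaugeRel_iff {b : V} {A B : E → G} :
    gaugeRel s t b A B ↔ ∃ g : V → G, g b = 1 ∧ gaugeAct s t g A = B := by
  simp only [gaugeRel, gaugeAct, funext_iff]

end Gauge

/-- A spanning tree rooted at `b`, encoded by its parent edges: the parent edge of `v ≠ b` joins `v`
to a vertex of smaller depth. -/
structure RootedSpanningTree {V E : Type*} (s t : E → V) (b : V) where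
  depth : V → ℕ
  parent : {v // v ≠ b} → E
  parent_spec : ∀ v, (s (parent v) = v ∧ depth (t (parent v)) < depth v) ∨
    (t (parent v) = v ∧ depth (s (parent v)) < depth v)

namespace RootedSpanningTree

variable {V E G : Type*} {s t : E → V} {b : V}

theorem nonempty_of_eqvGen
    (hconn : ∀ v : V, Relation.EqvGen (fun x y => ∃ e : E, s e = x ∧ t e = y) v b) :
    Nonempty (RootedSpanningTree s t b) := by
  let Γ := SimpleGraph.fromRel fun x y => ∃ e : E, s e = x ∧ t e = y
  have hparent : ∀ v : {v // v ≠ b}, ∃ e, (s e = v ∧ Γ.dist (t e) b < Γ.dist v b) ∨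
      (t e = v ∧ Γ.dist (s e) b < Γ.dist v b) := by
    rintro ⟨v, hv⟩
    obtain ⟨w, ⟨-, ⟨e, hs, ht⟩ | ⟨e, hs, ht⟩⟩, hlt⟩ :=
      (SimpleGraph.reachable_fromRel_of_eqvGen (hconn v)).exists_adj_dist_lt hv
    · exact ⟨e, .inl ⟨hs, ht ▸ hlt⟩⟩
    · exact ⟨e, .inr ⟨ht, hs ▸ hlt⟩⟩
  choose parent hparent using hparent
  exact ⟨⟨fun v => Γ.dist v b, parent, hparent⟩⟩

variable (T : RootedSpanningTree s t b)

theorem parent_injective : Function.Injective T.parent := by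
  intro v w h
  have hv := T.parent_spec v
  have hw := T.parent_spec w
  rw [h] at hv
  apply Subtype.ext
  grind

theorem target_eq_of_source_ne {v : {v // v ≠ b}} (hs : s (T.parent v) ≠ v) :
    t (T.parent v) = v :=
  ((T.parent_spec v).resolve_left fun h => hs h.1).1

theorem card_compl_range_parent [Fintype V] [Fintype E] [DecidableEq V] [DecidableEq E] :
    Fintype.card ↥(Set.range T.parent)ᶜ = Fintype.card E - (Fintype.card V - 1) := by
  rw [Fintype.card_compl_set, Set.card_range_of_injective T.parent_injective,
    Fintype.card_subtype_compl, Fintype.card_subtype_eq]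

variable [Group G]

def IsTrivialOnTree (A : E → G) : Prop := ∀ v, A (T.parent v) = 1

variable [DecidableEq V]

def parentVertex (v : {v // v ≠ b}) : V :=
  if s (T.parent v) = v then t (T.parent v) else s (T.parent v)

theorem depth_parentVertex_lt (v : {v // v ≠ b}) : T.depth (T.parentVertex v) < T.depth v := by
  have := T.parent_spec v
  unfold parentVertex
  split_ifs <;> grind

def gaugeFix (A : E → G) (v : V) : G :=
  if hv : v = b then 1
  else gaugeFix A (T.parentVertex ⟨v, hv⟩) *
    if s (T.parent ⟨v, hv⟩) = v then A (T.parent ⟨v, hv⟩) else (A (T.parent ⟨v, hv⟩))⁻¹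
termination_by T.depth v
decreasing_by exact T.depth_parentVertex_lt _

def normalize (A : E → G) : E → G := gaugeAct s t (T.gaugeFix A) A

theorem gaugeFix_base (A : E → G) : T.gaugeFix A b = 1 := by
  rw [gaugeFix, dif_pos rfl]

theorem isTrivialOnTree_normalize (A : E → G) : T.IsTrivialOnTree (T.normalize A) := by
  rintro ⟨v, hv⟩
  have hfix := gaugeFix.eq_1 T A v
  simp only [dif_neg hv, parentVertex] at hfix
  simp only [normalize, gaugeAct]
  split_ifs at hfix with hs
  · rw [hs, hfix]
    group
  · rw [T.target_eq_of_source_ne hs, hfix]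
    group

theorem eq_one_of_isTrivialOnTree {g : V → G} {A : E → G} (hg : g b = 1)
    (hA : T.IsTrivialOnTree A) (hgA : T.IsTrivialOnTree (gaugeAct s t g A)) (v : V) :
    g v = 1 := by
  by_cases hv : v = b
  · rwa [hv]
  have hedge : g (t (T.parent ⟨v, hv⟩)) = g (s (T.parent ⟨v, hv⟩)) := by
    simpa only [gaugeAct, hA ⟨v, hv⟩, mul_one, mul_inv_eq_one] using hgA ⟨v, hv⟩
  have hparent : g v = g (T.parentVertex ⟨v, hv⟩) := by
    unfold parentVertex
    split_ifs with hs
    · rw [hedge, hs]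
    · rw [← hedge, T.target_eq_of_source_ne hs]
  rw [hparent]
  exact eq_one_of_isTrivialOnTree hg hA hgA _
termination_by T.depth v
decreasing_by exact T.depth_parentVertex_lt _

theorem gaugeAct_eq_self_of_isTrivialOnTree {g : V → G} {A : E → G} (hg : g b = 1)
    (hA : T.IsTrivialOnTree A) (hgA : T.IsTrivialOnTree (gaugeAct s t g A)) :
    gaugeAct s t g A = A := by
  obtain rfl : g = 1 := funext (T.eq_one_of_isTrivialOnTree hg hA hgA)
  funext e
  simp [gaugeAct]

theorem gaugeRel_normalize (A : E → G) : gaugeRel s t b A (T.normalize A) :=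
  gaugeRel_iff.mpr ⟨_, T.gaugeFix_base A, rfl⟩

theorem normalize_eq_of_gaugeRel {A B : E → G} (h : gaugeRel s t b A B) :
    T.normalize A = T.normalize B := by
  obtain ⟨g, hg, rfl⟩ := gaugeRel_iff.mp h
  let k := T.gaugeFix (gaugeAct s t g A) * g * (T.gaugeFix A)⁻¹
  have hk : gaugeAct s t k (T.normalize A) = T.normalize (gaugeAct s t g A) := by
    simp [k, normalize, gaugeAct_gaugeAct]
  refine (T.gaugeAct_eq_self_of_isTrivialOnTree ?_ (T.isTrivialOnTree_normalize A)
    (hk ▸ T.isTrivialOnTree_normalize _)).symm.trans hk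
  simp [k, gaugeFix_base, hg]

theorem normalize_eq_self {A : E → G} (hA : T.IsTrivialOnTree A) : T.normalize A = A :=
  T.gaugeAct_eq_self_of_isTrivialOnTree (T.gaugeFix_base A) hA (T.isTrivialOnTree_normalize A)

def quotEquiv : Quot (gaugeRel (G := G) s t b) ≃ {A : E → G // T.IsTrivialOnTree A} where
  toFun := Quot.lift (fun A => ⟨T.normalize A, T.isTrivialOnTree_normalize A⟩)
    fun _ _ h => Subtype.ext (T.normalize_eq_of_gaugeRel h)
  invFun A := Quot.mk _ A.1
  left_inv := Quot.ind fun A => (Quot.sound (T.gaugeRel_normalize A)).symm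
  right_inv A := Subtype.ext (T.normalize_eq_self A.2)

end RootedSpanningTree

/-- For a finite connected graph, the quotient of lattice connections by based
gauge transformations is parametrized by independent loop holonomies: the
quotient of `E → G` by the action of the based gauge group is in bijection with
`G^{|E| − (|V| − 1)}`. -/
theorem quotient_lattice_connections_equiv {V E G : Type*} [Group G]
    [Fintype V] [Fintype E] (s t : E → V) (b : V)
    (hconn : ∀ v : V, Relation.EqvGen (fun x y => ∃ e : E, s e = x ∧ t e = y) v b) :
    Nonempty (Quot (gaugeRel (G := G) s t b) ≃
      (Fin (Fintype.card E - (Fintype.card V - 1)) → G)) := by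
  classical
  obtain ⟨T⟩ := RootedSpanningTree.nonempty_of_eqvGen hconn
  exact ⟨T.quotEquiv.trans <| (Equiv.subtypeEquivRight fun _ => Set.forall_mem_range.symm).trans <|
    (Equiv.eqOneOnEquivPiCompl _).trans <|
    Equiv.arrowCongr (Fintype.equivFinOfCardEq T.card_compl_range_parent) (Equiv.refl G)⟩
end

section
/- For each fixed t₀ ∈ [0,1], the set of elements h of G^{[0,1]} that are continuous at t₀ is contained in a measurable set of ν-measure zero, where ν is the product of Haar probability measures. -/
/-!
Choose a countable neighbourhood basis `U m` of `t₀` and cover the compact group `G` by finitely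
many open sets `W` of Haar measure `< 1` (possible since `G` is Hausdorff with two points).
If `h` is continuous at `t₀`, then `h` maps some `U m` into the `W` containing `h t₀`. Since
`U m` is infinite, this event is contained in cylinder events `{h | ∀ i ∈ F, h i ∈ W}` with
`F ⊆ U m` arbitrarily large, whose measures `μ₀ W ^ #F` tend to `0`.
-/

open MeasureTheory Filter Topology Set
open scoped ENNReal

section

variable {ι X : Type*} [MeasurableSpace X] {ν : Measure (ι → X)}

theorem measure_setOf_forall_mem_eq_zero {W : Set X} {p : ℝ≥0∞} (hp : p < 1)
    (hν : ∀ F : Finset ι, ν {h | ∀ i ∈ F, h i ∈ W} ≤ p ^ F.card)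
    {s : Set ι} (hs : s.Infinite) :
    ν {h | ∀ i ∈ s, h i ∈ W} = 0 := by
  have hle : ∀ n : ℕ, ν {h | ∀ i ∈ s, h i ∈ W} ≤ p ^ n := fun n ↦ by
    obtain ⟨F, hFs, rfl⟩ := hs.exists_subset_card_eq n
    calc ν {h | ∀ i ∈ s, h i ∈ W} ≤ ν {h | ∀ i ∈ F, h i ∈ W} :=
          measure_mono fun h hh i hi ↦ hh i (hFs hi)
      _ ≤ p ^ F.card := hν F
  exact le_zero_iff.mp <| ge_of_tendsto' (ENNReal.tendsto_pow_atTop_nhds_zero_of_lt_one hp) hle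

theorem measure_setOf_continuousAt_eq_zero [TopologicalSpace ι] [FirstCountableTopology ι]
    [T1Space ι] [TopologicalSpace X] (t₀ : ι) [(𝓝[≠] t₀).NeBot]
    {κ : Type*} [Countable κ] {W : κ → Set X} (hWo : ∀ j, IsOpen (W j))
    (hcover : ⋃ j, W j = univ) {p : κ → ℝ≥0∞} (hp : ∀ j, p j < 1)
    (hν : ∀ j (F : Finset ι), ν {h | ∀ i ∈ F, h i ∈ W j} ≤ p j ^ F.card) :
    ν {h : ι → X | ContinuousAt h t₀} = 0 := by
  obtain ⟨U, hU⟩ := (𝓝 t₀).exists_antitone_basis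
  have hsub : {h : ι → X | ContinuousAt h t₀} ⊆ ⋃ j, ⋃ m, {h | ∀ i ∈ U m, h i ∈ W j} := by
    intro h hh
    obtain ⟨j, hj⟩ := mem_iUnion.mp (hcover ▸ mem_univ (h t₀))
    obtain ⟨m, -, hm⟩ := hU.toHasBasis.mem_iff.mp (hh ((hWo j).mem_nhds hj))
    exact mem_iUnion₂.mpr ⟨j, m, fun i hi ↦ hm hi⟩
  refine measure_mono_null hsub (measure_iUnion_null fun j ↦ measure_iUnion_null fun m ↦ ?_)
  exact measure_setOf_forall_mem_eq_zero (hp j) (hν j) (infinite_of_mem_nhds t₀ (hU.mem m))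

end

theorem exists_isOpen_mem_measure_lt_one {X : Type*} [TopologicalSpace X] [T2Space X]
    [Nontrivial X] [MeasurableSpace X] [OpensMeasurableSpace X] (μ : Measure X)
    [IsProbabilityMeasure μ] [μ.IsOpenPosMeasure] (x : X) :
    ∃ W, IsOpen W ∧ x ∈ W ∧ μ W < 1 := by
  obtain ⟨y, hyx⟩ := exists_ne x
  obtain ⟨U, V, hUo, hVo, hxU, hyV, hUV⟩ := t2_separation hyx.symm
  refine ⟨U, hUo, hxU, (measure_mono hUV.subset_compl_right).trans_lt ?_⟩
  simpa using prob_compl_lt_one_sub_of_lt_prob (hVo.measure_pos μ ⟨y, hyV⟩) hVo.measurableSet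

theorem exists_finite_isOpen_cover_measure_lt_one {X : Type*} [TopologicalSpace X] [T2Space X]
    [CompactSpace X] [Nontrivial X] [MeasurableSpace X] [OpensMeasurableSpace X] (μ : Measure X)
    [IsProbabilityMeasure μ] [μ.IsOpenPosMeasure] :
    ∃ (S : Finset X) (W : S → Set X), (∀ j, IsOpen (W j)) ∧ ⋃ j, W j = univ ∧ ∀ j, μ (W j) < 1 := by
  choose W hWo hxW hW using exists_isOpen_mem_measure_lt_one μ
  obtain ⟨S, hS⟩ := CompactSpace.elim_nhds_subcover W fun x ↦ (hWo x).mem_nhds (hxW x)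
  exact ⟨S, fun j ↦ W j, fun j ↦ hWo j, by simpa [iUnion_subtype] using hS, fun j ↦ hW j⟩

theorem continuousAt_contained_in_null_general {G : Type*} [Group G] [TopologicalSpace G]
    [CompactSpace G] [T2Space G]
    [Nontrivial G] [MeasurableSpace G] [BorelSpace G]
    (μ₀ : Measure G) [μ₀.IsHaarMeasure] [IsProbabilityMeasure μ₀]
    (ν : Measure (Set.Icc (0 : ℝ) 1 → G))
    (hν : ∀ (s : Finset (Set.Icc (0 : ℝ) 1)) (B : Set.Icc (0 : ℝ) 1 → Set G),
      (∀ i ∈ s, MeasurableSet (B i)) →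
      ν {h : Set.Icc (0 : ℝ) 1 → G | ∀ i ∈ s, h i ∈ B i} = ∏ i ∈ s, μ₀ (B i))
    (t₀ : Set.Icc (0 : ℝ) 1) :
    ∃ N : Set (Set.Icc (0 : ℝ) 1 → G), MeasurableSet N ∧ ν N = 0 ∧
      {h : Set.Icc (0 : ℝ) 1 → G | ContinuousAt h t₀} ⊆ N := by
  obtain ⟨S, W, hWo, hcover, hW⟩ := exists_finite_isOpen_cover_measure_lt_one μ₀
  have hcyl : ∀ j (F : Finset (Set.Icc (0 : ℝ) 1)),
      ν {h | ∀ i ∈ F, h i ∈ W j} ≤ μ₀ (W j) ^ F.card := fun j F ↦ by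
    rw [hν F (fun _ ↦ W j) fun _ _ ↦ (hWo j).measurableSet, Finset.prod_const]
  have hnull : ν {h | ContinuousAt h t₀} = 0 :=
    measure_setOf_continuousAt_eq_zero t₀ hWo hcover hW hcyl
  exact ⟨toMeasurable ν _, measurableSet_toMeasurable _ _,
    (measure_toMeasurable _).trans hnull, subset_toMeasurable _ _⟩

/-- Let `G` be a compact Hausdorff second countable topological group with more
than one element, `μ₀` its normalized Haar probability measure, and `ν` the
infinite product measure on `G^[0,1]` (an independent copy of `μ₀` at each
point of `[0,1]`, characterized by its values on cylinder sets). Then, for each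
fixed `t₀ ∈ [0,1]`, the set of `h ∈ G^[0,1]` that are continuous at `t₀` is
contained in a measurable set of `ν`-measure zero. -/
theorem continuousAt_contained_in_null {G : Type*} [Group G] [TopologicalSpace G]
    [IsTopologicalGroup G] [CompactSpace G] [T2Space G] [SecondCountableTopology G]
    [Nontrivial G] [MeasurableSpace G] [BorelSpace G]
    (μ₀ : Measure G) [μ₀.IsHaarMeasure] [IsProbabilityMeasure μ₀]
    (ν : Measure (Set.Icc (0 : ℝ) 1 → G))
    (hν : ∀ (s : Finset (Set.Icc (0 : ℝ) 1)) (B : Set.Icc (0 : ℝ) 1 → Set G),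
      (∀ i ∈ s, MeasurableSet (B i)) →
      ν {h : Set.Icc (0 : ℝ) 1 → G | ∀ i ∈ s, h i ∈ B i} = ∏ i ∈ s, μ₀ (B i))
    (t₀ : Set.Icc (0 : ℝ) 1) :
    ∃ N : Set (Set.Icc (0 : ℝ) 1 → G), MeasurableSet N ∧ ν N = 0 ∧
      {h : Set.Icc (0 : ℝ) 1 → G | ContinuousAt h t₀} ⊆ N :=
  continuousAt_contained_in_null_general μ₀ ν hν t₀
end
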